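/- Let ψ: G → Isom(T) be a simplicial action of a group G on a simplicial tree T without inversion such that Fix(ψ(g)) ≠ ∅ for every g ∈ G. Then either (1) Fix(ψ(G)) ≠ ∅, or (2) there exists a sequence of edges (e_i)_{i∈ℕ} of T with strictly increasing stabilizers stab(e₁) ⊊ stab(e₂) ⊊ ···; moreover, in case (2), if G is countable then G = ⋃_{i∈ℕ} stab(e_i). -/

import Mathlib

/-! Common setup: Artin groups of edge-labeled finite simplicial graphs,
parabolic subgroups, Coxeter groups, tree actions, slenderness, median graphs. -/

/-- The conjugate `g P g⁻¹` of a subgroup `P`. -/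
def conjSub {H : Type} [Group H] (g : H) (P : Subgroup H) : Subgroup H :=
  P.map (MulAut.conj g).toMonoidHom

/-- A finite simplicial graph with edges labeled by integers `≥ 2`. -/
structure LabeledGraph where
  V : Type
  [fintypeV : Fintype V]
  Adj : V → V → Prop
  symm : ∀ {v w : V}, Adj v w → Adj w v
  loopless : ∀ v : V, ¬ Adj v v
  m : V → V → ℕ
  m_symm : ∀ v w : V, m v w = m w v
  two_le_m : ∀ {v w : V}, Adj v w → 2 ≤ m v w

attribute [instance] LabeledGraph.fintypeV

namespace LabeledGraph

variable (G : LabeledGraph)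

/-- The alternating word `v w v w ⋯` with `n` letters, as an element of the free group. -/
def altWord : G.V → G.V → ℕ → FreeGroup G.V
  | _, _, 0 => 1
  | v, w, Nat.succ n => FreeGroup.of v * altWord w v n

/-- The Artin relators `(v w v ⋯)(w v w ⋯)⁻¹` (with `m v w` letters in each factor). -/
def artinRels : Set (FreeGroup G.V) :=
  { r | ∃ v w : G.V, G.Adj v w ∧
      r = G.altWord v w (G.m v w) * (G.altWord w v (G.m v w))⁻¹ }

/-- The Artin group `A_Γ` of the labeled graph. -/
abbrev ArtinGroup := PresentedGroup G.artinRels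

/-- The standard generator of `A_Γ` corresponding to a vertex. -/
def agen (v : G.V) : G.ArtinGroup := PresentedGroup.of v

/-- The standard parabolic subgroup `A_X` generated by the vertices in `X`. -/
def aparabolic (X : Set G.V) : Subgroup G.ArtinGroup :=
  Subgroup.closure (G.agen '' X)

lemma aparabolic_mono {X Y : Set G.V} (h : X ⊆ Y) : G.aparabolic X ≤ G.aparabolic Y :=
  Subgroup.closure_mono (Set.image_mono h)

/-- A parabolic subgroup is a conjugate of a standard parabolic subgroup. -/
def IsParabolic (P : Subgroup G.ArtinGroup) : Prop :=
  ∃ (g : G.ArtinGroup) (X : Set G.V), P = conjSub g (G.aparabolic X)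

/-- A subset of vertices is free of infinity if any two distinct vertices of it are adjacent. -/
def FreeOfInfinity (X : Set G.V) : Prop :=
  ∀ v ∈ X, ∀ w ∈ X, v ≠ w → G.Adj v w

/-- A complete parabolic subgroup: a conjugate of a standard parabolic subgroup `A_X`
with `X` free of infinity. -/
def IsCompleteParabolic (P : Subgroup G.ArtinGroup) : Prop :=
  ∃ (g : G.ArtinGroup) (X : Set G.V),
    G.FreeOfInfinity X ∧ P = conjSub g (G.aparabolic X)

/-- A parabolic subgroup of the standard parabolic subgroup `A_Y`:
a conjugate, by an element of `A_Y`, of a standard parabolic `A_X` with `X ⊆ Y`. -/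
def IsParabolicIn (Y : Set G.V) (P : Subgroup G.ArtinGroup) : Prop :=
  ∃ g ∈ G.aparabolic Y, ∃ X ⊆ Y, P = conjSub g (G.aparabolic X)

/-- Property (Int): for each free-of-infinity subset `Y` and all parabolic subgroups
`P₁, P₂` of `A_Y`, the intersection `P₁ ⊓ P₂` is a parabolic subgroup of `A_Y`. -/
def PropInt : Prop :=
  ∀ Y : Set G.V, G.FreeOfInfinity Y →
    ∀ P₁ P₂ : Subgroup G.ArtinGroup,
      G.IsParabolicIn Y P₁ → G.IsParabolicIn Y P₂ → G.IsParabolicIn Y (P₁ ⊓ P₂)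

/-- Property (Int+−): the intersection of a complete parabolic subgroup with any
parabolic subgroup is parabolic. -/
def PropIntPM : Prop :=
  ∀ P₁ P₂ : Subgroup G.ArtinGroup,
    G.IsCompleteParabolic P₁ → G.IsParabolic P₂ → G.IsParabolic (P₁ ⊓ P₂)

/-- Property (Int++): the intersection of any two parabolic subgroups is parabolic. -/
def PropIntPP : Prop :=
  ∀ P₁ P₂ : Subgroup G.ArtinGroup,
    G.IsParabolic P₁ → G.IsParabolic P₂ → G.IsParabolic (P₁ ⊓ P₂)

/-- The Coxeter relators: the Artin relators together with the squares of the generators. -/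
def coxRels : Set (FreeGroup G.V) :=
  G.artinRels ∪ { r | ∃ v : G.V, r = FreeGroup.of v * FreeGroup.of v }

/-- The Coxeter group `W_Γ` associated to `A_Γ`. -/
abbrev CoxGroup := PresentedGroup G.coxRels

/-- The standard generator of `W_Γ` corresponding to a vertex. -/
def cgen (v : G.V) : G.CoxGroup := PresentedGroup.of v

/-- The standard parabolic subgroup `W_X` of the Coxeter group. -/
def cparabolic (X : Set G.V) : Subgroup G.CoxGroup :=
  Subgroup.closure (G.cgen '' X)

/-- The word length of an element of the Coxeter group with respect to the
standard generators. -/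
noncomputable def clength (g : G.CoxGroup) : ℕ :=
  sInf { n | ∃ w : List G.V, w.length = n ∧ (w.map G.cgen).prod = g }

/-- `A_X` is of spherical type when the Coxeter group `W_X` is finite. -/
def SphericalType (X : Set G.V) : Prop :=
  ((G.cparabolic X : Set G.CoxGroup)).Finite

/-- `A_Γ` is of FC-type if every complete standard parabolic subgroup is of spherical type. -/
def FCType : Prop :=
  ∀ X : Set G.V, G.FreeOfInfinity X → G.SphericalType X

/-- `P` is a minimal parabolic subgroup containing `B` (the parabolic closure of `B`,
when it is unique). -/
def IsPC (B : Set G.ArtinGroup) (P : Subgroup G.ArtinGroup) : Prop :=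
  G.IsParabolic P ∧ B ⊆ (P : Set G.ArtinGroup) ∧
    ∀ Q : Subgroup G.ArtinGroup, G.IsParabolic Q → B ⊆ (Q : Set G.ArtinGroup) →
      Q ≤ P → Q = P

end LabeledGraph

section TreesAndActions

variable {Γ : Type} [Group Γ]

/-- The action `ψ` preserves the adjacency relation of the graph `T`
(i.e. it is an action by graph automorphisms). -/
def PreservesAdj {V : Type} (T : SimpleGraph V) (ψ : Γ →* Equiv.Perm V) : Prop :=
  ∀ (g : Γ) (v w : V), T.Adj v w → T.Adj (ψ g v) (ψ g w)

/-- The action `ψ` is without inversion: no element swaps the endpoints of an edge. -/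
def NoInversion {V : Type} (T : SimpleGraph V) (ψ : Γ →* Equiv.Perm V) : Prop :=
  ∀ (g : Γ) (v w : V), T.Adj v w → ¬ (ψ g v = w ∧ ψ g w = v)

end TreesAndActions

/-- Property FA: every simplicial action without inversion on a simplicial tree
has a global fixed vertex. -/
def HasFA (Γ : Type) [Group Γ] : Prop :=
  ∀ (V : Type) (T : SimpleGraph V), T.IsTree →
    ∀ ψ : Γ →* Equiv.Perm V, PreservesAdj T ψ → NoInversion T ψ →
      ∃ v : V, ∀ g : Γ, ψ g v = v

/-- Property FA′: every simplicial action without inversion on a simplicial tree is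
locally elliptic, i.e. every element fixes a vertex. -/
def HasFA' (Γ : Type) [Group Γ] : Prop :=
  ∀ (V : Type) (T : SimpleGraph V), T.IsTree →
    ∀ ψ : Γ →* Equiv.Perm V, PreservesAdj T ψ → NoInversion T ψ →
      ∀ g : Γ, ∃ v : V, ψ g v = v

/-- A (discrete) group `H` is lcH-slender if every abstract group homomorphism from a
locally compact Hausdorff topological group to `H` is continuous (w.r.t. the discrete
topology `⊥` on `H`). -/
def LcHSlender (H : Type) [Group H] : Prop :=
  ∀ (L : Type) [tL : TopologicalSpace L] [Group L] [IsTopologicalGroup L]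
    [LocallyCompactSpace L] [T2Space L],
    ∀ f : L →* H, @Continuous L H tL ⊥ ⇑f

/-- The `n`-dimensional hypercube graph. -/
def HypercubeGraph (n : ℕ) : SimpleGraph (Fin n → Bool) where
  Adj x y := ∃! i, x i ≠ y i
  symm := by
    constructor
    rintro x y ⟨i, hi, hu⟩
    exact ⟨i, hi.symm, fun j hj => hu j hj.symm⟩
  loopless := by
    constructor
    rintro x ⟨i, hi, -⟩
    exact hi rfl

/-- `w` is a median of the triple `x y z` in the graph `T`. -/
def IsMedianVertex {V : Type} (T : SimpleGraph V) (x y z w : V) : Prop :=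
  T.dist x w + T.dist w y = T.dist x y ∧
  T.dist y w + T.dist w z = T.dist y z ∧
  T.dist x w + T.dist w z = T.dist x z

/-- A median graph: a connected graph in which every triple of vertices has a unique
median.  (Median graphs are exactly the 1-skeleta of CAT(0) cube complexes.) -/
def IsMedianGraph {V : Type} (T : SimpleGraph V) : Prop :=
  T.Connected ∧ ∀ x y z : V, ∃! w : V, IsMedianVertex T x y z w

/-- The corresponding cube complex is finite dimensional: there is a bound on the
dimension of hypercubes embedding into the graph. -/
def FinDimCubical {V : Type} (T : SimpleGraph V) : Prop :=
  ∃ n : ℕ, ∀ k : ℕ, Nonempty (HypercubeGraph k ↪g T) → k ≤ n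

/-- Property FC′: every (cellular) action on a finite-dimensional CAT(0) cube complex —
encoded via its 1-skeleton, a finite-dimensional median graph — is locally elliptic,
i.e. every element has a bounded orbit (equivalently, a fixed point in the complex). -/
def HasFC' (Γ : Type) [Group Γ] : Prop :=
  ∀ (V : Type) (T : SimpleGraph V), IsMedianGraph T → FinDimCubical T →
    ∀ ψ : Γ →* Equiv.Perm V, PreservesAdj T ψ →
      ∀ g : Γ, ∃ (v : V) (C : ℕ), ∀ n : ℤ, T.dist v (ψ (g ^ n) v) ≤ C

set_option linter.unusedSectionVars false
open SimpleGraph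

namespace Stmt9
variable {V : Type} {T : SimpleGraph V}

lemma getVert_mem_support {u v : V} (p : T.Walk u v) (i : ℕ) : p.getVert i ∈ p.support := by
  induction p generalizing i with
  | nil => simp [Walk.getVert]
  | cons h q ih =>
    cases i with
    | zero => simp [Walk.getVert]
    | succ n => simp only [Walk.support_cons, List.mem_cons]; exact Or.inr (ih n)

lemma mem_support_iff_getVert {u v y : V} (p : T.Walk u v) :
    y ∈ p.support ↔ ∃ i ≤ p.length, p.getVert i = y := by
  constructor
  · intro hy
    induction p with
    | nil => simp at hy; exact ⟨0, by simp [Walk.getVert, hy]⟩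
    | cons h q ih =>
      rcases List.mem_cons.1 (by simpa using hy) with h1 | h2
      · exact ⟨0, by simp [Walk.getVert, h1.symm]⟩
      · rcases ih h2 with ⟨i, hi, hgi⟩
        exact ⟨i + 1, by simpa using Nat.succ_le_succ hi, hgi⟩
  · rintro ⟨i, _, rfl⟩; exact getVert_mem_support p i

lemma exists_walk_take {u v : V} (p : T.Walk u v) (i : ℕ) (hi : i ≤ p.length) :
    ∃ w : T.Walk u (p.getVert i), w.length = i := by
  induction p generalizing i with
  | nil =>
    obtain rfl : i = 0 := Nat.le_zero.1 (by simpa using hi)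
    exact ⟨Walk.nil, rfl⟩
  | cons h q ih =>
    cases i with
    | zero => exact ⟨Walk.nil.copy rfl (by simp [Walk.getVert]), (Walk.length_copy _ _ _).trans rfl⟩
    | succ n =>
      rcases ih n (by simpa using hi) with ⟨w, hw⟩
      exact ⟨(w.cons h).copy rfl rfl, by simpa using hw⟩

lemma exists_walk_drop {u v : V} (p : T.Walk u v) (i : ℕ) :
    ∃ w : T.Walk (p.getVert i) v, w.length = p.length - i := by
  induction p generalizing i with
  | nil => exact ⟨Walk.nil.copy (by cases i <;> rfl) rfl, by simp⟩
  | cons h q ih =>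
    cases i with
    | zero => exact ⟨(Walk.cons h q).copy (by simp [Walk.getVert]) rfl, (Walk.length_copy _ _ _).trans (by simp)⟩
    | succ n =>
      rcases ih n with ⟨w, hw⟩
      exact ⟨w.copy rfl rfl, by simpa using hw⟩

lemma getVert_map {V' : Type} {T' : SimpleGraph V'} (f : T →g T') {u v : V}
    (p : T.Walk u v) (i : ℕ) : (p.map f).getVert i = f (p.getVert i) := by
  induction p generalizing i with
  | nil => simp [Walk.getVert]
  | cons h q ih =>
    cases i with
    | zero => simp [Walk.getVert]
    | succ n => simpa [Walk.getVert] using ih n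

lemma append_isPath {u m v : V} {p : T.Walk u m} {q : T.Walk m v}
    (hp : p.IsPath) (hq : q.IsPath)
    (hint : ∀ y, y ∈ p.support → y ∈ q.support → y = m) :
    (p.append q).IsPath := by
  rw [Walk.isPath_def, Walk.support_append, List.nodup_append]
  refine ⟨hp.support_nodup, hq.support_nodup.sublist (List.tail_sublist _), ?_⟩
  intro y hyp z hyq hyz
  subst hyz
  have hy : y ∈ q.support := List.mem_of_mem_tail hyq
  have hym : y = m := hint y hyp hy
  have hnd := hq.support_nodup
  rw [q.support_eq_cons] at hnd
  exact (List.nodup_cons.1 hnd).1 (hym ▸ hyq)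
variable [DecidableEq V] (hT : T.IsTree)
include hT

lemma path_eq {u v : V} {p q : T.Walk u v} (hp : p.IsPath) (hq : q.IsPath) : p = q :=
  (hT.existsUnique_path u v).unique hp hq

lemma path_length_eq_dist {u v : V} {p : T.Walk u v} (hp : p.IsPath) :
    p.length = T.dist u v := by
  obtain ⟨q, hq⟩ := hT.isConnected.exists_walk_length_eq_dist u v
  have hqp : q.IsPath := q.isPath_of_length_eq_dist hq
  rw [path_eq hT hp hqp, hq]

noncomputable def geo (u v : V) : T.Walk u v :=
  ((hT.existsUnique_path u v).exists).choose

lemma geo_isPath (u v : V) : (geo hT u v).IsPath :=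
  ((hT.existsUnique_path u v).exists).choose_spec

lemma geo_length (u v : V) : (geo hT u v).length = T.dist u v :=
  path_length_eq_dist hT (geo_isPath hT u v)

lemma eq_geo {u v : V} {p : T.Walk u v} (hp : p.IsPath) : p = geo hT u v :=
  path_eq hT hp (geo_isPath hT u v)

lemma dist_getVert {u v : V} {p : T.Walk u v} (hp : p.IsPath) {i : ℕ} (hi : i ≤ p.length) :
    T.dist u (p.getVert i) = i := by
  obtain ⟨w1, hw1⟩ := exists_walk_take p i hi
  obtain ⟨w2, hw2⟩ := exists_walk_drop p i
  have h1 := SimpleGraph.dist_le w1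
  have h2 := SimpleGraph.dist_le w2
  rw [hw1] at h1
  rw [hw2] at h2
  have h3 : T.dist u v = p.length := (path_length_eq_dist hT hp).symm
  have h4 := hT.isConnected.dist_triangle (u := u) (v := p.getVert i) (w := v)
  omega

lemma dist_getVert_right {u v : V} {p : T.Walk u v} (hp : p.IsPath) {i : ℕ} (hi : i ≤ p.length) :
    T.dist (p.getVert i) v = p.length - i := by
  obtain ⟨w1, hw1⟩ := exists_walk_take p i hi
  obtain ⟨w2, hw2⟩ := exists_walk_drop p i
  have h1 := SimpleGraph.dist_le w1
  have h2 := SimpleGraph.dist_le w2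
  rw [hw1] at h1
  rw [hw2] at h2
  have h3 : T.dist u v = p.length := (path_length_eq_dist hT hp).symm
  have h4 := hT.isConnected.dist_triangle (u := u) (v := p.getVert i) (w := v)
  omega

/-- A vertex on a path is the getVert at its distance from the start. -/
lemma getVert_dist_of_mem {u v y : V} {p : T.Walk u v} (hp : p.IsPath) (hy : y ∈ p.support) :
    p.getVert (T.dist u y) = y ∧ T.dist u y ≤ p.length := by
  obtain ⟨i, hi, rfl⟩ := (mem_support_iff_getVert p).1 hy
  rw [dist_getVert hT hp hi]
  exact ⟨rfl, hi⟩

lemma mem_support_unique_pos {u v y z : V} {p : T.Walk u v} (hp : p.IsPath)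
    (hy : y ∈ p.support) (hz : z ∈ p.support) (hd : T.dist u y = T.dist u z) : y = z := by
  have h1 := (getVert_dist_of_mem hT hp hy).1
  have h2 := (getVert_dist_of_mem hT hp hz).1
  rw [← h1, ← h2, hd]

lemma betweenness {u v y : V} {p : T.Walk u v} (hp : p.IsPath) (hy : y ∈ p.support) :
    T.dist u y + T.dist y v = T.dist u v := by
  have hs := p.take_spec hy
  have h1 : (p.takeUntil y hy).IsPath := hp.takeUntil hy
  have h2 : (p.dropUntil y hy).IsPath := hp.dropUntil hy
  have := congrArg Walk.length hs
  rw [Walk.length_append] at this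
  rw [path_length_eq_dist hT h1, path_length_eq_dist hT h2] at this
  rw [this, path_length_eq_dist hT hp]

lemma takeUntil_eq_geo {u v y : V} {p : T.Walk u v} (hp : p.IsPath) (hy : y ∈ p.support) :
    p.takeUntil y hy = geo hT u y := eq_geo hT (hp.takeUntil hy)

lemma dropUntil_eq_geo {u v y : V} {p : T.Walk u v} (hp : p.IsPath) (hy : y ∈ p.support) :
    p.dropUntil y hy = geo hT y v := eq_geo hT (hp.dropUntil hy)

/-- Splitting getVert of a path at an intermediate vertex: left part. -/
lemma getVert_split_left {u v y : V} {p : T.Walk u v} (hp : p.IsPath) (hy : y ∈ p.support)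
    {t : ℕ} (ht : t ≤ T.dist u y) : p.getVert t = (geo hT u y).getVert t := by
  conv_lhs => rw [← p.take_spec hy]
  rw [Walk.getVert_append]
  have hlen : (p.takeUntil y hy).length = T.dist u y := by
    rw [takeUntil_eq_geo hT hp hy, geo_length]
  rw [takeUntil_eq_geo hT hp hy] at *
  rcases lt_or_eq_of_le ht with h | h
  · rw [if_pos (hlen ▸ h)]
  · rw [if_neg (by omega)]
    subst h
    rw [hlen]
    simp only [Nat.sub_self, Walk.getVert_zero]
    rw [← hlen]
    exact (Walk.getVert_length _).symm

/-- Splitting getVert of a path at an intermediate vertex: right part. -/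
lemma getVert_split_right {u v y : V} {p : T.Walk u v} (hp : p.IsPath) (hy : y ∈ p.support)
    {t : ℕ} (ht : T.dist u y ≤ t) : p.getVert t = (geo hT y v).getVert (t - T.dist u y) := by
  conv_lhs => rw [← p.take_spec hy]
  rw [Walk.getVert_append]
  have hlen : (p.takeUntil y hy).length = T.dist u y := by
    rw [takeUntil_eq_geo hT hp hy, geo_length]
  rw [dropUntil_eq_geo hT hp hy, hlen]
  rw [if_neg (by omega)]

section Action
variable {Γ : Type} [Group Γ] {ψ : Γ →* Equiv.Perm V}
variable (hadj : ∀ (g : Γ) (v w : V), T.Adj v w → T.Adj (ψ g v) (ψ g w))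
include hadj

/-- The graph homomorphism induced by `ψ g`. -/
def act (g : Γ) : T →g T := ⟨ψ g, fun h => hadj g _ _ h⟩

lemma act_apply (g : Γ) (v : V) : act hadj g v = ψ g v := rfl

lemma act_coe (g : Γ) : ⇑(act hadj g) = ⇑(ψ g) := rfl

lemma dist_act (g : Γ) (a b : V) : T.dist (ψ g a) (ψ g b) = T.dist a b := by
  classical
  have hp := geo_isPath hT a b
  have hq : ((geo hT a b).map (act hadj g)).IsPath :=
    Walk.map_isPath_of_injective (f := act hadj g) (ψ g).injective hp
  have := path_length_eq_dist hT hq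
  rw [Walk.length_map, path_length_eq_dist hT hp] at this
  exact this.symm

lemma conv_fix {g : Γ} {a b : V} (hga : ψ g a = a) (hgb : ψ g b = b) :
    ∀ y ∈ (geo hT a b).support, ψ g y = y := by
  classical
  intro y hy
  set p := geo hT a b with hpdef
  have hp := geo_isPath hT a b
  have hq : ((p.map (act hadj g)).copy hga hgb).IsPath := by
    refine (Walk.isPath_copy _ _ _).2 ?_
    exact Walk.map_isPath_of_injective (f := act hadj g) (ψ g).injective hp
  have heq : (p.map (act hadj g)).copy hga hgb = p := path_eq hT hq hp
  obtain ⟨i, hi, rfl⟩ := (mem_support_iff_getVert p).1 hy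
  have := congrArg (fun w => Walk.getVert w i) heq
  have h3 : ((p.map (act hadj g)).copy hga hgb).getVert i = (p.map (act hadj g)).getVert i :=
    Walk.getVert_copy _ _ _ _
  have h5 := h3.symm.trans this
  rw [getVert_map] at h5
  exact h5

/-- Midpoint lemma: for an elliptic `u` and any `x`, there is a fixed vertex `c` on
the geodesic from `x` to `u x`, at half the distance. -/
lemma midpoint {g : Γ} {f : V} (hf : ψ g f = f) (x : V) :
    ∃ c, ψ g c = c ∧ c ∈ (geo hT x (ψ g x)).support ∧
      2 * T.dist x c = T.dist x (ψ g x) := by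
  classical
  set P := geo hT x f with hP
  set Q := geo hT (ψ g x) f with hQ
  have hPp := geo_isPath hT x f
  have hQp := geo_isPath hT (ψ g x) f
  have hlen : Q.length = P.length := by
    have hd := dist_act hT hadj g x f
    rw [hf] at hd
    rw [hQ, hP, geo_length, geo_length, hd]
  -- the first index of P whose vertex lies on Q
  set I : Set ℕ := {i | i ≤ P.length ∧ P.getVert i ∈ Q.support} with hI
  have hIne : I.Nonempty := ⟨P.length, le_rfl, by rw [Walk.getVert_length]; exact Q.end_mem_support⟩
  set i0 := sInf I with hi0
  obtain ⟨hi0le, hi0mem⟩ : i0 ≤ P.length ∧ P.getVert i0 ∈ Q.support := Nat.sInf_mem hIne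
  set c := P.getVert i0 with hc
  -- position of c on Q is also i0
  obtain ⟨j, hj, hjc⟩ := (mem_support_iff_getVert Q).1 hi0mem
  have hdxc : T.dist x c = i0 := dist_getVert hT hPp hi0le
  have hdcf : T.dist c f = P.length - i0 := dist_getVert_right hT hPp hi0le
  have hdyc : T.dist (ψ g x) (Q.getVert j) = j := dist_getVert hT hQp hj
  have hdcf' : T.dist (Q.getVert j) f = Q.length - j := dist_getVert_right hT hQp hj
  rw [hjc] at hdyc hdcf'
  have hji : j = i0 := by omega
  -- g maps P to Q, hence fixes c
  have hgc : ψ g c = c := by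
    have hq : ((P.map (act hadj g)).copy rfl hf).IsPath := by
      refine (Walk.isPath_copy _ _ _).2 ?_
      exact Walk.map_isPath_of_injective (f := act hadj g) (ψ g).injective hPp
    have heq : (P.map (act hadj g)).copy rfl hf = Q := path_eq hT hq hQp
    have := congrArg (fun w => Walk.getVert w i0) heq
    have h3 : ((P.map (act hadj g)).copy rfl hf).getVert i0 = (P.map (act hadj g)).getVert i0 :=
      Walk.getVert_copy _ _ _ _
    have this := h3.symm.trans this
    rw [getVert_map] at this
    have h2 : ψ g c = Q.getVert i0 := this
    rw [h2, ← hji, hjc]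
  -- the concatenation of the two half-geodesics is the geodesic from x to g x
  have hcP : c ∈ P.support := getVert_mem_support P i0
  set A := P.takeUntil c hcP with hA
  have hAp : A.IsPath := hPp.takeUntil hcP
  have hAlen : A.length = i0 := by
    rw [hA, takeUntil_eq_geo hT hPp hcP, geo_length, hdxc]
  set B0 := Q.takeUntil c hi0mem with hB0
  have hB0p : B0.IsPath := hQp.takeUntil hi0mem
  have hB0len : B0.length = i0 := by
    rw [hB0, takeUntil_eq_geo hT hQp hi0mem, geo_length, hdyc]
    exact hji
  have hW : (A.append B0.reverse).IsPath := by
    apply append_isPath hAp hB0p.reverse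
    intro y hyA hyB
    rw [Walk.support_reverse, List.mem_reverse] at hyB
    have hyP : y ∈ P.support := Walk.support_takeUntil_subset P hcP hyA
    have hyQ : y ∈ Q.support := Walk.support_takeUntil_subset Q hi0mem hyB
    -- position of y on P is ≤ i0 but also ∈ I hence ≥ i0
    obtain ⟨t, htle, hty⟩ := (mem_support_iff_getVert P).1 hyP
    have hdty : T.dist x y = t := by rw [← hty]; exact dist_getVert hT hPp htle
    have hbtw := betweenness hT hAp hyA
    have hdxc' : T.dist x c = i0 := hdxc
    have htle' : t ≤ i0 := by omega
    have hge : i0 ≤ t := Nat.sInf_le ⟨htle, hty ▸ hyQ⟩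
    have : t = i0 := le_antisymm htle' hge
    rw [← hty, this]
  have hWgeo : A.append B0.reverse = geo hT x (ψ g x) := eq_geo hT hW
  have hcW : c ∈ (geo hT x (ψ g x)).support := by
    rw [← hWgeo, Walk.mem_support_append_iff]
    exact Or.inl (hA ▸ Walk.end_mem_support A)
  have hWlen : T.dist x (ψ g x) = 2 * i0 := by
    rw [← geo_length hT x (ψ g x), ← hWgeo, Walk.length_append, hAlen,
      Walk.length_reverse, hB0len]
    omega
  exact ⟨c, hgc, hcW, by rw [hdxc, hWlen]⟩


lemma serre {g h : Γ} {x fg fh : V} (hfg : ψ g fg = fg) (hfh : ψ h fh = fh)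
    (hx : ψ g (ψ h x) = x) : ∃ w, ψ g w = w ∧ ψ h w = w := by
  classical
  by_cases hxy : ψ h x = x
  · exact ⟨x, by rwa [hxy] at hx, hxy⟩
  · set y := ψ h x with hy
    obtain ⟨c, hc, hcmem, hcd⟩ := midpoint hT hadj hfh x
    obtain ⟨c', hc', hcmem', hcd'⟩ := midpoint hT hadj hfg y
    rw [← hy] at hcmem hcd
    have hgyx : ψ g y = x := hx
    rw [hgyx] at hcmem' hcd'
    -- c' is on the geodesic from x to y as well
    have hrev : geo hT y x = (geo hT x y).reverse :=
      path_eq hT (geo_isPath hT y x) (geo_isPath hT x y).reverse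
    have hcmem'' : c' ∈ (geo hT x y).support := by
      rw [hrev, Walk.support_reverse, List.mem_reverse] at hcmem'
      exact hcmem'
    -- positions agree
    have hb1 := betweenness hT (geo_isPath hT x y) hcmem
    have hb2 := betweenness hT (geo_isPath hT x y) hcmem''
    have hcomm1 : T.dist y c' = T.dist c' y := SimpleGraph.dist_comm ..
    have hcomm2 : T.dist y x = T.dist x y := SimpleGraph.dist_comm ..
    have hpos : T.dist x c = T.dist x c' := by omega
    have := mem_support_unique_pos hT (geo_isPath hT x y) hcmem hcmem'' hpos
    exact ⟨c, this ▸ hc', hc⟩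

variable (hell : ∀ g : Γ, ∃ v, ψ g v = v)
include hell

lemma fix_nonempty (S : Finset Γ) : ∃ v : V, ∀ g ∈ S, ψ g v = v := by
  classical
  induction S using Finset.induction_on with
  | empty => exact ⟨(hell 1).choose, by simp⟩
  | @insert a S ha IH =>
    obtain ⟨p0, hp0⟩ := IH
    obtain ⟨q0, hq0⟩ := hell a
    set N : Set ℕ := {n | ∃ p q : V, (∀ s ∈ S, ψ s p = p) ∧ ψ a q = q ∧ T.dist p q = n} with hN
    have hNne : N.Nonempty := ⟨T.dist p0 q0, p0, q0, hp0, hq0, rfl⟩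
    obtain ⟨p, q, hp, hq, hpq⟩ := Nat.sInf_mem hNne
    have key : ∀ s ∈ S, ψ s q = q := by
      intro s hs
      -- a common fixed point of s and a
      obtain ⟨x, hxx⟩ := hell (s * a)
      have hsa : ψ s (ψ a x) = x := by
        rw [map_mul] at hxx
        exact hxx
      obtain ⟨fs, hfs⟩ := hell s
      obtain ⟨z, hzs, hza⟩ := serre hT hadj hfs hq0 hsa
      -- geodesic from q to z is fixed by a
      have hBfix : ∀ y ∈ (geo hT q z).support, ψ a y = y := conv_fix hT hadj hq hza
      -- concatenation is a path
      have hW : ((geo hT p q).append (geo hT q z)).IsPath := by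
        apply append_isPath (geo_isPath hT p q) (geo_isPath hT q z)
        intro y hyA hyB
        have hb := betweenness hT (geo_isPath hT p q) hyA
        have hyN : T.dist p y ∈ N := ⟨p, y, hp, hBfix y hyB, rfl⟩
        have h1 : sInf N ≤ T.dist p y := Nat.sInf_le hyN
        have h2 : T.dist y q = 0 := by omega
        exact ((hT.isConnected.dist_eq_zero_iff).1 h2)
      have hWgeo : (geo hT p q).append (geo hT q z) = geo hT p z := eq_geo hT hW
      have hqmem : q ∈ (geo hT p z).support := by
        rw [← hWgeo, Walk.mem_support_append_iff]
        exact Or.inl (Walk.end_mem_support _)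
      exact conv_fix hT hadj (hp s hs) hzs q hqmem
    refine ⟨q, ?_⟩
    intro g hg
    rcases Finset.mem_insert.1 hg with rfl | hgS
    · exact hq
    · exact key g hgS


variable (x0 : V)

lemma exists_proj (S : Finset Γ) :
    ∃ p : V, (∀ g ∈ S, ψ g p = p) ∧
      ∀ q : V, (∀ g ∈ S, ψ g q = q) → T.dist x0 p ≤ T.dist x0 q := by
  classical
  set N : Set ℕ := {n | ∃ v : V, (∀ g ∈ S, ψ g v = v) ∧ T.dist x0 v = n} with hN
  obtain ⟨v0, hv0⟩ := fix_nonempty hT hadj hell S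
  have hNne : N.Nonempty := ⟨T.dist x0 v0, v0, hv0, rfl⟩
  obtain ⟨p, hp, hpd⟩ := Nat.sInf_mem hNne
  exact ⟨p, hp, fun q hq => hpd ▸ Nat.sInf_le ⟨q, hq, rfl⟩⟩

noncomputable def pp (S : Finset Γ) : V := (exists_proj hT hadj hell x0 S).choose

lemma pp_fix (S : Finset Γ) : ∀ g ∈ S, ψ g (pp hT hadj hell x0 S) = pp hT hadj hell x0 S :=
  (exists_proj hT hadj hell x0 S).choose_spec.1

lemma pp_min (S : Finset Γ) :
    ∀ q : V, (∀ g ∈ S, ψ g q = q) → T.dist x0 (pp hT hadj hell x0 S) ≤ T.dist x0 q :=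
  (exists_proj hT hadj hell x0 S).choose_spec.2

lemma proj_between (S : Finset Γ) {c : V} (hc : ∀ g ∈ S, ψ g c = c) :
    pp hT hadj hell x0 S ∈ (geo hT x0 c).support := by
  classical
  set p := pp hT hadj hell x0 S with hpdef
  have hBfix : ∀ y ∈ (geo hT p c).support, ∀ g ∈ S, ψ g y = y := fun y hy g hg =>
    conv_fix hT hadj (pp_fix hT hadj hell x0 S g hg) (hc g hg) y hy
  have hW : ((geo hT x0 p).append (geo hT p c)).IsPath := by
    apply append_isPath (geo_isPath hT x0 p) (geo_isPath hT p c)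
    intro y hyA hyB
    have hb := betweenness hT (geo_isPath hT x0 p) hyA
    have h1 : T.dist x0 p ≤ T.dist x0 y := pp_min hT hadj hell x0 S y (hBfix y hyB)
    have h2 : T.dist y p = 0 := by omega
    exact ((hT.isConnected.dist_eq_zero_iff).1 h2)
  have hWgeo : (geo hT x0 p).append (geo hT p c) = geo hT x0 c := eq_geo hT hW
  rw [← hWgeo, Walk.mem_support_append_iff]
  exact Or.inl (Walk.end_mem_support _)

lemma pp_mono {S S' : Finset Γ} (hss : S ⊆ S') :
    T.dist x0 (pp hT hadj hell x0 S) ≤ T.dist x0 (pp hT hadj hell x0 S') :=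
  pp_min hT hadj hell x0 S _ (fun g hg => pp_fix hT hadj hell x0 S' g (hss hg))

lemma unbounded_of_nofix (hnofix : ¬ ∃ v : V, ∀ g : Γ, ψ g v = v) (n : ℕ) :
    ∃ S : Finset Γ, n ≤ T.dist x0 (pp hT hadj hell x0 S) := by
  classical
  by_contra hb
  push_neg at hb
  set D : Set ℕ := Set.range (fun S : Finset Γ => T.dist x0 (pp hT hadj hell x0 S)) with hD
  have hDne : D.Nonempty := ⟨_, ⟨∅, rfl⟩⟩
  have hDbd : BddAbove D := ⟨n, by rintro _ ⟨S, rfl⟩; exact le_of_lt (hb S)⟩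
  obtain ⟨S0, hS0⟩ := Nat.sSup_mem hDne hDbd
  have hS0' : T.dist x0 (pp hT hadj hell x0 S0) = sSup D := hS0
  apply hnofix
  refine ⟨pp hT hadj hell x0 S0, fun g => ?_⟩
  set S := insert g S0 with hS
  have h1 : T.dist x0 (pp hT hadj hell x0 S) ≤ sSup D :=
    le_csSup hDbd ⟨S, rfl⟩
  have h2 : T.dist x0 (pp hT hadj hell x0 S0) ≤ T.dist x0 (pp hT hadj hell x0 S) :=
    pp_mono hT hadj hell x0 (Finset.subset_insert g S0)
  have hfixS0 : ∀ g' ∈ S0, ψ g' (pp hT hadj hell x0 S) = pp hT hadj hell x0 S :=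
    fun g' hg' => pp_fix hT hadj hell x0 S g' (Finset.mem_insert_of_mem hg')
  have hmem := proj_between hT hadj hell x0 S0 hfixS0
  have hb2 := betweenness hT (geo_isPath hT x0 (pp hT hadj hell x0 S)) hmem
  have heq : pp hT hadj hell x0 S = pp hT hadj hell x0 S0 := by
    have h3 : T.dist (pp hT hadj hell x0 S0) (pp hT hadj hell x0 S) = 0 := by omega
    exact ((hT.isConnected.dist_eq_zero_iff).1 h3).symm
  rw [← heq]
  exact pp_fix hT hadj hell x0 S g (Finset.mem_insert_self g S0)


variable (hnofix : ¬ ∃ v : V, ∀ g : Γ, ψ g v = v)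

noncomputable def FF (n : ℕ) : Finset Γ :=
  (unbounded_of_nofix hT hadj hell x0 hnofix n).choose

lemma FF_spec (n : ℕ) : n ≤ T.dist x0 (pp hT hadj hell x0 (FF hT hadj hell x0 hnofix n)) :=
  (unbounded_of_nofix hT hadj hell x0 hnofix n).choose_spec

noncomputable def SS (n : ℕ) : Finset Γ :=
  letI := Classical.decEq Γ
  (Finset.range (n + 1)).biUnion (FF hT hadj hell x0 hnofix)

lemma SS_mono {k m : ℕ} (h : k ≤ m) :
    SS hT hadj hell x0 hnofix k ⊆ SS hT hadj hell x0 hnofix m := by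
  classical
  unfold SS
  intro a ha
  simp only [Finset.mem_biUnion, Finset.mem_range] at *
  obtain ⟨i, hi, hai⟩ := ha
  exact ⟨i, by omega, by convert hai⟩

lemma FF_subset_SS (n : ℕ) :
    FF hT hadj hell x0 hnofix n ⊆ SS hT hadj hell x0 hnofix n := by
  classical
  unfold SS
  intro a ha
  simp only [Finset.mem_biUnion, Finset.mem_range]
  exact ⟨n, by omega, by convert ha⟩

lemma SS_dist (n : ℕ) : n ≤ T.dist x0 (pp hT hadj hell x0 (SS hT hadj hell x0 hnofix n)) :=
  le_trans (FF_spec hT hadj hell x0 hnofix n)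
    (pp_mono hT hadj hell x0 (FF_subset_SS hT hadj hell x0 hnofix n))

/-- The ray. -/
noncomputable def rr (k : ℕ) : V :=
  (geo hT x0 (pp hT hadj hell x0 (SS hT hadj hell x0 hnofix k))).getVert k

lemma coh {k N : ℕ} (h : k ≤ N) :
    (geo hT x0 (pp hT hadj hell x0 (SS hT hadj hell x0 hnofix N))).getVert k =
      rr hT hadj hell x0 hnofix k := by
  set y := pp hT hadj hell x0 (SS hT hadj hell x0 hnofix k) with hy
  have hyfix : ∀ g ∈ SS hT hadj hell x0 hnofix k,
      ψ g (pp hT hadj hell x0 (SS hT hadj hell x0 hnofix N)) =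
        pp hT hadj hell x0 (SS hT hadj hell x0 hnofix N) :=
    fun g hg => pp_fix hT hadj hell x0 _ g (SS_mono hT hadj hell x0 hnofix h hg)
  have hmem := proj_between hT hadj hell x0 (SS hT hadj hell x0 hnofix k) hyfix
  have hdy : k ≤ T.dist x0 y := SS_dist hT hadj hell x0 hnofix k
  rw [getVert_split_left hT (geo_isPath hT x0 _) hmem hdy]
  rfl

lemma rr_dist (k : ℕ) : T.dist x0 (rr hT hadj hell x0 hnofix k) = k := by
  apply dist_getVert hT (geo_isPath hT x0 _)
  rw [geo_length]
  exact SS_dist hT hadj hell x0 hnofix k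

lemma rr_adj (k : ℕ) :
    T.Adj (rr hT hadj hell x0 hnofix k) (rr hT hadj hell x0 hnofix (k + 1)) := by
  have hlen : k + 1 ≤ (geo hT x0 (pp hT hadj hell x0 (SS hT hadj hell x0 hnofix (k+1)))).length := by
    rw [geo_length]; exact SS_dist hT hadj hell x0 hnofix (k+1)
  have := Walk.adj_getVert_succ
    (geo hT x0 (pp hT hadj hell x0 (SS hT hadj hell x0 hnofix (k+1)))) (i := k) (by omega)
  rwa [coh hT hadj hell x0 hnofix (by omega : k ≤ k+1),
    coh hT hadj hell x0 hnofix (le_refl (k+1))] at this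

lemma fixes_tail (g : Γ) :
    ∀ k ≥ T.dist x0 (pp hT hadj hell x0 {g}),
      ψ g (rr hT hadj hell x0 hnofix k) = rr hT hadj hell x0 hnofix k := by
  classical
  intro k hk
  set K := T.dist x0 (pp hT hadj hell x0 {g}) with hK
  set S' : Finset Γ := insert g (SS hT hadj hell x0 hnofix k) with hS'
  set P := geo hT x0 (pp hT hadj hell x0 S') with hP
  have hPp := geo_isPath hT x0 (pp hT hadj hell x0 S')
  have hfixg : ψ g (pp hT hadj hell x0 S') = pp hT hadj hell x0 S' :=
    pp_fix hT hadj hell x0 S' g (Finset.mem_insert_self g _)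
  set qg := pp hT hadj hell x0 ({g} : Finset Γ) with hqg
  have hqmem : qg ∈ P.support :=
    proj_between hT hadj hell x0 {g}
      (fun a ha => by rw [Finset.mem_singleton] at ha; rw [ha]; exact hfixg)
  -- P.getVert k = rr k
  have hrk : P.getVert k = rr hT hadj hell x0 hnofix k := by
    set y := pp hT hadj hell x0 (SS hT hadj hell x0 hnofix k) with hy
    have hymem : y ∈ P.support :=
      proj_between hT hadj hell x0 (SS hT hadj hell x0 hnofix k)
        (fun a ha => pp_fix hT hadj hell x0 S' a (Finset.mem_insert_of_mem ha))
    have hdy : k ≤ T.dist x0 y := SS_dist hT hadj hell x0 hnofix k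
    rw [getVert_split_left hT hPp hymem hdy]
    rfl
  -- the suffix from qg is fixed by g
  have hdq : T.dist x0 qg = K := rfl
  have hsplit := getVert_split_right hT hPp hqmem (t := k) (by rw [hdq]; exact hk)
  have hsup : P.getVert k ∈ (geo hT qg (pp hT hadj hell x0 S')).support := by
    rw [hsplit]; exact getVert_mem_support _ _
  have hfixqg : ψ g qg = qg := pp_fix hT hadj hell x0 {g} g (Finset.mem_singleton_self g)
  have := conv_fix hT hadj hfixqg hfixg _ hsup
  rwa [hrk] at this

lemma fix_interval {g : Γ} {i t j : ℕ} (hit : i ≤ t) (htj : t ≤ j)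
    (hgi : ψ g (rr hT hadj hell x0 hnofix i) = rr hT hadj hell x0 hnofix i)
    (hgj : ψ g (rr hT hadj hell x0 hnofix j) = rr hT hadj hell x0 hnofix j) :
    ψ g (rr hT hadj hell x0 hnofix t) = rr hT hadj hell x0 hnofix t := by
  classical
  set P := geo hT x0 (pp hT hadj hell x0 (SS hT hadj hell x0 hnofix j)) with hP
  have hPp := geo_isPath hT x0 (pp hT hadj hell x0 (SS hT hadj hell x0 hnofix j))
  have hmemj : rr hT hadj hell x0 hnofix j ∈ P.support := by
    rw [← coh hT hadj hell x0 hnofix (le_refl j)]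
    exact getVert_mem_support _ _
  have hdj : T.dist x0 (rr hT hadj hell x0 hnofix j) = j := rr_dist hT hadj hell x0 hnofix j
  -- pass to the geodesic x0 → rr j
  set P2 := geo hT x0 (rr hT hadj hell x0 hnofix j) with hP2
  have hP2p := geo_isPath hT x0 (rr hT hadj hell x0 hnofix j)
  have hsplit_t := getVert_split_left hT hPp hmemj (t := t) (by omega)
  have hsplit_i := getVert_split_left hT hPp hmemj (t := i) (by omega)
  have hti : P2.getVert t = rr hT hadj hell x0 hnofix t := by
    rw [← hsplit_t, coh hT hadj hell x0 hnofix htj]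
  have hii : P2.getVert i = rr hT hadj hell x0 hnofix i := by
    rw [← hsplit_i, coh hT hadj hell x0 hnofix (by omega : i ≤ j)]
  have hmemi : rr hT hadj hell x0 hnofix i ∈ P2.support := by
    rw [← hii]; exact getVert_mem_support _ _
  have hdi : T.dist x0 (rr hT hadj hell x0 hnofix i) = i := rr_dist hT hadj hell x0 hnofix i
  have hsplit2 := getVert_split_right hT hP2p hmemi (t := t) (by omega)
  have hsup : P2.getVert t ∈
      (geo hT (rr hT hadj hell x0 hnofix i) (rr hT hadj hell x0 hnofix j)).support := by
    rw [hsplit2]; exact getVert_mem_support _ _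
  have := conv_fix hT hadj hgi hgj _ hsup
  rwa [hti] at this


/-- Stabilizer (as a set) of the `k`-th edge of the ray. -/
def st (k : ℕ) : Set Γ :=
  {g : Γ | Sym2.map (ψ g) s(rr hT hadj hell x0 hnofix k, rr hT hadj hell x0 hnofix (k+1)) =
    s(rr hT hadj hell x0 hnofix k, rr hT hadj hell x0 hnofix (k+1))}

variable (hni : ∀ (g : Γ) (v w : V), T.Adj v w → ¬ (ψ g v = w ∧ ψ g w = v))
include hni

lemma st_iff (k : ℕ) (g : Γ) :
    g ∈ st hT hadj hell x0 hnofix k ↔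
      ψ g (rr hT hadj hell x0 hnofix k) = rr hT hadj hell x0 hnofix k ∧
      ψ g (rr hT hadj hell x0 hnofix (k+1)) = rr hT hadj hell x0 hnofix (k+1) := by
  constructor
  · intro h
    have h' : s(ψ g (rr hT hadj hell x0 hnofix k), ψ g (rr hT hadj hell x0 hnofix (k+1))) =
        s(rr hT hadj hell x0 hnofix k, rr hT hadj hell x0 hnofix (k+1)) := by
      rw [← Sym2.map_pair_eq]; exact h
    rcases Sym2.eq_iff.1 h' with ⟨h1, h2⟩ | ⟨h1, h2⟩
    · exact ⟨h1, h2⟩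
    · exact absurd ⟨h1, h2⟩ (hni g _ _ (rr_adj hT hadj hell x0 hnofix k))
  · rintro ⟨h1, h2⟩
    show Sym2.map _ _ = _
    rw [Sym2.map_pair_eq, h1, h2]

lemma st_succ (k : ℕ) : st hT hadj hell x0 hnofix k ⊆ st hT hadj hell x0 hnofix (k+1) := by
  intro g hg
  rw [st_iff hT hadj hell x0 hnofix hni] at hg ⊢
  obtain ⟨h1, h2⟩ := hg
  set K := T.dist x0 (pp hT hadj hell x0 ({g} : Finset Γ)) with hK
  have hgN : ψ g (rr hT hadj hell x0 hnofix (max (k+2) K)) =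
      rr hT hadj hell x0 hnofix (max (k+2) K) :=
    fixes_tail hT hadj hell x0 hnofix g _ (le_max_right _ _)
  refine ⟨h2, ?_⟩
  exact fix_interval hT hadj hell x0 hnofix (by omega : k+1 ≤ k+2)
    (le_max_left (k+2) K) h2 hgN

lemma st_mono {a b : ℕ} (h : a ≤ b) :
    st hT hadj hell x0 hnofix a ⊆ st hT hadj hell x0 hnofix b := by
  induction b, h using Nat.le_induction with
  | base => exact le_refl _
  | succ n hn ih => exact subset_trans ih (st_succ hT hadj hell x0 hnofix hni n)

lemma ev_st (g : Γ) :
    ∀ k ≥ T.dist x0 (pp hT hadj hell x0 ({g} : Finset Γ)), g ∈ st hT hadj hell x0 hnofix k := by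
  intro k hk
  rw [st_iff hT hadj hell x0 hnofix hni]
  exact ⟨fixes_tail hT hadj hell x0 hnofix g k hk,
    fixes_tail hT hadj hell x0 hnofix g (k+1) (by omega)⟩

lemma not_stab (K : ℕ) :
    ∃ k, K ≤ k ∧ st hT hadj hell x0 hnofix k ≠ st hT hadj hell x0 hnofix (k+1) := by
  by_contra hb
  push_neg at hb
  have hconst : ∀ k, K ≤ k → st hT hadj hell x0 hnofix k = st hT hadj hell x0 hnofix K := by
    intro k hk
    induction k, hk using Nat.le_induction with
    | base => rfl
    | succ n hn ih => rw [← hb n hn]; exact ih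
  apply hnofix
  refine ⟨rr hT hadj hell x0 hnofix K, fun g => ?_⟩
  set Kg := T.dist x0 (pp hT hadj hell x0 ({g} : Finset Γ)) with hKg
  have hmem : g ∈ st hT hadj hell x0 hnofix (max K Kg) :=
    ev_st hT hadj hell x0 hnofix hni g _ (le_max_right _ _)
  rw [hconst _ (le_max_left _ _)] at hmem
  exact ((st_iff hT hadj hell x0 hnofix hni K g).1 hmem).1

noncomputable def nxt (K : ℕ) : ℕ := (not_stab hT hadj hell x0 hnofix hni K).choose

lemma nxt_spec (K : ℕ) : K ≤ nxt hT hadj hell x0 hnofix hni K ∧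
    st hT hadj hell x0 hnofix (nxt hT hadj hell x0 hnofix hni K) ≠
      st hT hadj hell x0 hnofix (nxt hT hadj hell x0 hnofix hni K + 1) :=
  (not_stab hT hadj hell x0 hnofix hni K).choose_spec

noncomputable def idx : ℕ → ℕ
  | 0 => nxt hT hadj hell x0 hnofix hni 0
  | n + 1 => nxt hT hadj hell x0 hnofix hni (idx n + 1)

lemma idx_strict (n : ℕ) : idx hT hadj hell x0 hnofix hni n + 1 ≤
    idx hT hadj hell x0 hnofix hni (n+1) :=
  (nxt_spec hT hadj hell x0 hnofix hni _).1

lemma idx_ne (n : ℕ) : st hT hadj hell x0 hnofix (idx hT hadj hell x0 hnofix hni n) ≠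
    st hT hadj hell x0 hnofix (idx hT hadj hell x0 hnofix hni n + 1) := by
  cases n with
  | zero => exact (nxt_spec hT hadj hell x0 hnofix hni 0).2
  | succ m => exact (nxt_spec hT hadj hell x0 hnofix hni _).2

lemma idx_ge (n : ℕ) : n ≤ idx hT hadj hell x0 hnofix hni n := by
  induction n with
  | zero => omega
  | succ m ih => have := idx_strict hT hadj hell x0 hnofix hni m; omega


end Action
end Stmt9

/-! **Statement 9.** Let `ψ` be a simplicial action of a group `Γ` on a tree `T` without
inversion such that every element fixes a vertex.  Then either there is a global fixed
vertex, or there is a sequence of edges of `T` whose stabilizers form a strictly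
increasing chain; moreover, in the latter case, if `Γ` is countable then `Γ` is the
union of these edge stabilizers. -/
theorem locally_elliptic_tree_dichotomy (Γ : Type) [Group Γ]
    (V : Type) (T : SimpleGraph V) (hT : T.IsTree)
    (ψ : Γ →* Equiv.Perm V) (hadj : PreservesAdj T ψ) (hni : NoInversion T ψ)
    (hell : ∀ g : Γ, ∃ v : V, ψ g v = v) :
    (∃ v : V, ∀ g : Γ, ψ g v = v) ∨
      ∃ e : ℕ → Sym2 V, (∀ i, e i ∈ T.edgeSet) ∧
        (∀ i, ({g : Γ | Sym2.map (ψ g) (e i) = e i} : Set Γ) ⊂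
              {g : Γ | Sym2.map (ψ g) (e (i + 1)) = e (i + 1)}) ∧
        (Countable Γ → ∀ g : Γ, ∃ i, Sym2.map (ψ g) (e i) = e i) := by
  classical
  by_cases hfix : ∃ v : V, ∀ g : Γ, ψ g v = v
  · exact Or.inl hfix
  · right
    letI : DecidableEq V := Classical.decEq V
    have hadj' : ∀ (g : Γ) (v w : V), T.Adj v w → T.Adj (ψ g v) (ψ g w) := hadj
    have hni' : ∀ (g : Γ) (v w : V), T.Adj v w → ¬ (ψ g v = w ∧ ψ g w = v) := hni
    obtain ⟨x0, -⟩ := hell 1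
    refine ⟨fun i => s(Stmt9.rr hT hadj' hell x0 hfix (Stmt9.idx hT hadj' hell x0 hfix hni' i),
      Stmt9.rr hT hadj' hell x0 hfix (Stmt9.idx hT hadj' hell x0 hfix hni' i + 1)), ?_, ?_, ?_⟩
    · intro i
      exact (Stmt9.rr_adj hT hadj' hell x0 hfix _)
    · intro i
      have h1 : Stmt9.st hT hadj' hell x0 hfix (Stmt9.idx hT hadj' hell x0 hfix hni' i) ⊂
          Stmt9.st hT hadj' hell x0 hfix (Stmt9.idx hT hadj' hell x0 hfix hni' i + 1) :=
        (Stmt9.st_succ hT hadj' hell x0 hfix hni' _).ssubset_of_ne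
          (Stmt9.idx_ne hT hadj' hell x0 hfix hni' i)
      have h2 : Stmt9.st hT hadj' hell x0 hfix (Stmt9.idx hT hadj' hell x0 hfix hni' i + 1) ⊆
          Stmt9.st hT hadj' hell x0 hfix (Stmt9.idx hT hadj' hell x0 hfix hni' (i+1)) :=
        Stmt9.st_mono hT hadj' hell x0 hfix hni'
          (Stmt9.idx_strict hT hadj' hell x0 hfix hni' i)
      exact ssubset_of_ssubset_of_subset h1 h2
    · intro _ g
      refine ⟨T.dist x0 (Stmt9.pp hT hadj' hell x0 ({g} : Finset Γ)), ?_⟩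
      exact Stmt9.ev_st hT hadj' hell x0 hfix hni' g _
        (Stmt9.idx_ge hT hadj' hell x0 hfix hni' _)
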